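/- arXiv:2007.07692 — 8 statements merged into one kernel-verified Lean document; each statement's English description precedes it below -/
import Mathlib

section
/- Exchanging the two variables exchanges T_• and T_∘: for all natural numbers a, b, the coefficient of z_•^a·z_∘^b in T_• equals the coefficient of z_•^b·z_∘^a in T_∘. -/
/-!
The system `T = p + T² + 2UT`, `U = q + U² + 2UT` has at most one solution with zero constant
terms: the differences of two solutions satisfy a homogeneous linear system whose coefficients have
no constant term, so each substitution raises their order by one and they vanish. The system is
invariant under exchanging `(p, T)` with `(q, U)`, and renaming the variables by the swap
`0 ↔ 1` exchanges `z_•` and `z_∘`; hence `T_•` is `T_∘` with its variables swapped.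
-/

open MvPowerSeries

namespace MvPowerSeries

variable {σ R : Type*}

section LinearSystem

variable [CommSemiring R] {f g a b c d : MvPowerSeries σ R}

theorem natCast_succ_le_order_mul (ha : constantCoeff a = 0) {n : ℕ} (hf : n ≤ f.order) :
    ((n + 1 : ℕ) : ℕ∞) ≤ (a * f).order := calc
  ((n + 1 : ℕ) : ℕ∞) = 1 + n := by push_cast; ring
  _ ≤ a.order + f.order := add_le_add (one_le_order_iff_constCoeff_eq_zero.2 ha) hf
  _ ≤ (a * f).order := le_order_mul

theorem natCast_succ_le_order_mul_add_mul (ha : constantCoeff a = 0) (hb : constantCoeff b = 0)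
    {n : ℕ} (hf : n ≤ f.order) (hg : n ≤ g.order) :
    ((n + 1 : ℕ) : ℕ∞) ≤ (a * f + b * g).order :=
  (le_min (natCast_succ_le_order_mul ha hf) (natCast_succ_le_order_mul hb hg)).trans
    min_order_le_add

theorem eq_zero_of_eq_mul_add_mul (ha : constantCoeff a = 0) (hb : constantCoeff b = 0)
    (hc : constantCoeff c = 0) (hd : constantCoeff d = 0)
    (hf : f = a * f + b * g) (hg : g = c * f + d * g) : f = 0 ∧ g = 0 := by
  have key : ∀ n : ℕ, n ≤ f.order ∧ n ≤ g.order := by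
    intro n
    induction n with
    | zero => simp
    | succ n ih =>
      constructor
      · rw [hf]
        exact natCast_succ_le_order_mul_add_mul ha hb ih.1 ih.2
      · rw [hg]
        exact natCast_succ_le_order_mul_add_mul hc hd ih.1 ih.2
  simp only [← order_eq_top_iff, ENat.eq_top_iff_forall_ge]
  exact ⟨fun n ↦ (key n).1, fun n ↦ (key n).2⟩

end LinearSystem

def SolvesTreeSystem [CommSemiring R] (p q T U : MvPowerSeries σ R) : Prop :=
  constantCoeff T = 0 ∧ constantCoeff U = 0 ∧
    T = p + T ^ 2 + 2 * U * T ∧ U = q + U ^ 2 + 2 * U * T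

namespace SolvesTreeSystem

variable {p q T U T' U' : MvPowerSeries σ R}

theorem symm [CommSemiring R] (h : SolvesTreeSystem p q T U) : SolvesTreeSystem q p U T := by
  obtain ⟨hT0, hU0, hT, hU⟩ := h
  exact ⟨hU0, hT0, hU.trans (by ring), hT.trans (by ring)⟩

theorem rename [CommSemiring R] {τ : Type*} (e : σ → τ) [Filter.TendstoCofinite e]
    (h : SolvesTreeSystem p q T U) :
    SolvesTreeSystem (rename e p) (rename e q) (rename e T) (rename e U) := by
  obtain ⟨hT0, hU0, hT, hU⟩ := h
  exact ⟨by rwa [constantCoeff_rename], by rwa [constantCoeff_rename],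
    (congrArg (MvPowerSeries.rename e) hT).trans (by simp only [map_add, map_mul, map_pow, map_ofNat]),
    (congrArg (MvPowerSeries.rename e) hU).trans (by simp only [map_add, map_mul, map_pow, map_ofNat])⟩

theorem unique [CommRing R] (h : SolvesTreeSystem p q T U) (h' : SolvesTreeSystem p q T' U') :
    T = T' ∧ U = U' := by
  obtain ⟨hT0, hU0, hT, hU⟩ := h
  obtain ⟨hT'0, hU'0, hT', hU'⟩ := h'
  have hdiff := eq_zero_of_eq_mul_add_mul (f := T - T') (g := U - U')
    (a := T + T' + 2 * U) (b := 2 * T') (c := 2 * U') (d := U + U' + 2 * T)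
    (by simp [hT0, hT'0, hU0]) (by simp [hT'0]) (by simp [hU'0]) (by simp [hU0, hU'0, hT0])
    (by linear_combination hT - hT') (by linear_combination hU - hU')
  exact ⟨sub_eq_zero.1 hdiff.1, sub_eq_zero.1 hdiff.2⟩

end SolvesTreeSystem

end MvPowerSeries

/-- Exchanging the two variables exchanges `T_•` and `T_∘`: the coefficient of
`z_•^a·z_∘^b` in `T_•` equals the coefficient of `z_•^b·z_∘^a` in `T_∘`. -/
theorem bivariate_tree_series_swap_symm
    (Tb To : MvPowerSeries (Fin 2) ℚ)
    (hTb0 : MvPowerSeries.constantCoeff Tb = 0)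
    (hTo0 : MvPowerSeries.constantCoeff To = 0)
    (hTb : Tb = MvPowerSeries.X 0 + Tb ^ 2 + 2 * To * Tb)
    (hTo : To = MvPowerSeries.X 1 + To ^ 2 + 2 * To * Tb) :
    ∀ a b : ℕ,
      MvPowerSeries.coeff (Finsupp.single (0 : Fin 2) a + Finsupp.single 1 b) Tb =
      MvPowerSeries.coeff (Finsupp.single (0 : Fin 2) b + Finsupp.single 1 a) To := by
  intro a b
  let e : Fin 2 ↪ Fin 2 := (Equiv.swap 0 1).toEmbedding
  have h : SolvesTreeSystem (X 0) (X 1) Tb To := ⟨hTb0, hTo0, hTb, hTo⟩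
  have hswap : SolvesTreeSystem (X 0) (X 1) (rename e To) (rename e Tb) := by
    simpa [e] using (h.rename e).symm
  rw [(h.unique hswap).1, ← coeff_embDomain_rename e To]
  simp [e, Finsupp.embDomain_add, add_comm]
end

section
/- There exists a unique pair (D_•, D_∘) of formal power series in ℚ⟦t_•, t_∘⟧, both with constant coefficient 0, satisfying the system D_• = t_• + 2·(t_•+t_∘)·D_• + t_•·D_∘·D_• and D_∘ = t_∘ + 2·(t_•+t_∘)·D_∘ + t_∘·D_•·D_∘. -/
/-!
The right-hand side of the system is contracting for the total degree: since `t_•`, `t_∘` and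
`2(t_• + t_∘)` have no constant term, two pairs of series that agree below degree `n` are sent to
pairs that agree below degree `n + 1`. As in Banach's fixed-point theorem, the iterates from any
starting pair stabilise degree by degree to a fixed point, any two fixed points agree in every
degree, and the equations themselves force the constant coefficients of the fixed point to vanish.
-/

open Function MvPowerSeries

section EqBelow

variable {M β : Type*} {deg : M → ℕ}

variable (deg) in
def EqBelow (n : ℕ) (f g : M → β) : Prop := ∀ m, deg m < n → f m = g m

theorem EqBelow.trans {n : ℕ} {f g h : M → β} (hfg : EqBelow deg n f g)
    (hgh : EqBelow deg n g h) : EqBelow deg n f h :=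
  fun m hm => (hfg m hm).trans (hgh m hm)

theorem EqBelow.mono {n k : ℕ} {f g : M → β} (h : EqBelow deg k f g) (hnk : n ≤ k) :
    EqBelow deg n f g :=
  fun m hm => h m (hm.trans_le hnk)

theorem eq_of_forall_eqBelow {f g : M → β} (h : ∀ n, EqBelow deg n f g) : f = g :=
  funext fun m => h (deg m + 1) m (Nat.lt_succ_self _)

variable {F : (M → β) → M → β}

theorem eq_of_isFixedPt_of_eqBelow_succ
    (hF : ∀ n f g, EqBelow deg n f g → EqBelow deg (n + 1) (F f) (F g)) {f g : M → β}
    (hf : IsFixedPt F f) (hg : IsFixedPt F g) : f = g := by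
  refine eq_of_forall_eqBelow (deg := deg) fun n => ?_
  induction n with
  | zero => exact fun m hm => absurd hm (Nat.not_lt_zero _)
  | succ n ih => rw [← hf.eq, ← hg.eq]; exact hF n f g ih

theorem eqBelow_iterate_of_eqBelow_succ
    (hF : ∀ n f g, EqBelow deg n f g → EqBelow deg (n + 1) (F f) (F g)) (f : M → β)
    {n k : ℕ} (hnk : n ≤ k) : EqBelow deg n (F^[n] f) (F^[k] f) := by
  have hstep : ∀ n, EqBelow deg n (F^[n] f) (F^[n + 1] f) := by
    intro n
    induction n with
    | zero => exact fun m hm => absurd hm (Nat.not_lt_zero _)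
    | succ n ih =>
      rw [iterate_succ_apply', iterate_succ_apply' F (n + 1)]
      exact hF n _ _ ih
  induction k, hnk using Nat.le_induction with
  | base => exact fun _ _ => rfl
  | succ k hnk ih => exact ih.trans ((hstep k).mono hnk)

theorem exists_isFixedPt_of_eqBelow_succ [Nonempty β]
    (hF : ∀ n f g, EqBelow deg n f g → EqBelow deg (n + 1) (F f) (F g)) :
    ∃ f, IsFixedPt F f := by
  obtain ⟨f₀⟩ : Nonempty (M → β) := inferInstance
  set L : M → β := fun m => F^[deg m + 1] f₀ m
  have hL : ∀ n, EqBelow deg n L (F^[n] f₀) := fun n m hm =>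
    eqBelow_iterate_of_eqBelow_succ hF f₀ hm m (Nat.lt_succ_self _)
  refine ⟨L, funext fun m => ?_⟩
  calc F L m = F^[deg m + 2] f₀ m := by
        rw [iterate_succ_apply']; exact hF _ _ _ (hL (deg m + 1)) m (by omega)
    _ = L m :=
        (eqBelow_iterate_of_eqBelow_succ hF f₀ (Nat.le_succ _) m (Nat.lt_succ_self _)).symm

theorem existsUnique_isFixedPt_of_eqBelow_succ [Nonempty β]
    (hF : ∀ n f g, EqBelow deg n f g → EqBelow deg (n + 1) (F f) (F g)) :
    ∃! f, IsFixedPt F f :=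
  let ⟨f, hf⟩ := exists_isFixedPt_of_eqBelow_succ hF
  ⟨f, hf, fun _ hg => eq_of_isFixedPt_of_eqBelow_succ hF hg hf⟩

end EqBelow

namespace MvPowerSeries

variable {σ R : Type*} [CommRing R]

theorem forall_coeff_eq_iff_le_order_sub {f g : MvPowerSeries σ R} {n : ℕ} :
    (∀ d, d.degree < n → coeff d f = coeff d g) ↔ (n : ℕ∞) ≤ (f - g).order := by
  refine ⟨fun h => le_order fun d hd => ?_, fun h d hd => ?_⟩
  · rw [map_sub, h d (by exact_mod_cast hd), sub_self]
  · rw [← sub_eq_zero, ← map_sub]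
    exact coeff_of_lt_order ((Nat.cast_lt.mpr hd).trans_le h)

theorem succ_le_order_mul {a f : MvPowerSeries σ R} {n : ℕ∞} (ha : constantCoeff a = 0)
    (hf : n ≤ f.order) : n + 1 ≤ (a * f).order :=
  calc n + 1 ≤ f.order + a.order := add_le_add hf (one_le_order_iff_constCoeff_eq_zero.mpr ha)
    _ ≤ (a * f).order := by rw [add_comm]; exact le_order_mul

def coeffPairEquiv : MvPowerSeries σ R × MvPowerSeries σ R ≃ ((σ →₀ ℕ) → R × R) :=
  (Equiv.arrowProdEquivProdArrow _ (fun _ => R) (fun _ => R)).symm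

theorem eqBelow_coeffPairEquiv_iff {P Q : MvPowerSeries σ R × MvPowerSeries σ R} {n : ℕ} :
    EqBelow Finsupp.degree n (coeffPairEquiv P) (coeffPairEquiv Q) ↔
      (n : ℕ∞) ≤ (P.1 - Q.1).order ∧ (n : ℕ∞) ≤ (P.2 - Q.2).order := by
  simp only [← forall_coeff_eq_iff_le_order_sub, EqBelow, ← forall_and, Prod.ext_iff]
  rfl

noncomputable def motzkinRhs (a c u v : MvPowerSeries σ R) : MvPowerSeries σ R :=
  a + c * u + a * v * u

noncomputable def motzkinMap (a b c : MvPowerSeries σ R)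
    (P : MvPowerSeries σ R × MvPowerSeries σ R) : MvPowerSeries σ R × MvPowerSeries σ R :=
  (motzkinRhs a c P.1 P.2, motzkinRhs b c P.2 P.1)

variable {a b c : MvPowerSeries σ R}

theorem constantCoeff_motzkinRhs (ha : constantCoeff a = 0) (hc : constantCoeff c = 0)
    (u v : MvPowerSeries σ R) : constantCoeff (motzkinRhs a c u v) = 0 := by
  simp [motzkinRhs, ha, hc]

theorem succ_le_order_sub_motzkinRhs (ha : constantCoeff a = 0) (hc : constantCoeff c = 0)
    {u u' v v' : MvPowerSeries σ R} {n : ℕ∞} (hu : n ≤ (u - u').order)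
    (hv : n ≤ (v - v').order) :
    n + 1 ≤ (motzkinRhs a c u v - motzkinRhs a c u' v').order := by
  have hdiff : motzkinRhs a c u v - motzkinRhs a c u' v' =
      (c + a * v) * (u - u') + (a * u') * (v - v') := by
    simp only [motzkinRhs]; ring
  rw [hdiff]
  refine le_trans (le_min ?_ ?_) min_order_le_add
  · exact succ_le_order_mul (by simp [ha, hc]) hu
  · exact succ_le_order_mul (by simp [ha]) hv

theorem existsUnique_isFixedPt_motzkinMap (ha : constantCoeff a = 0)
    (hb : constantCoeff b = 0) (hc : constantCoeff c = 0) :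
    ∃! P, IsFixedPt (motzkinMap a b c) P := by
  let e := coeffPairEquiv (σ := σ) (R := R)
  have hcontract : ∀ n f g, EqBelow Finsupp.degree n f g →
      EqBelow Finsupp.degree (n + 1) (e (motzkinMap a b c (e.symm f)))
        (e (motzkinMap a b c (e.symm g))) := by
    intro n f g hfg
    rw [← e.apply_symm_apply f, ← e.apply_symm_apply g, eqBelow_coeffPairEquiv_iff] at hfg
    rw [eqBelow_coeffPairEquiv_iff, Nat.cast_succ]
    exact ⟨succ_le_order_sub_motzkinRhs ha hc hfg.1 hfg.2,
      succ_le_order_sub_motzkinRhs hb hc hfg.2 hfg.1⟩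
  refine e.existsUnique_congr (fun P => ?_) |>.mpr
    (existsUnique_isFixedPt_of_eqBelow_succ hcontract)
  simp only [IsFixedPt, e.symm_apply_apply, e.apply_eq_iff_eq]

end MvPowerSeries

/-- There exists a unique pair `(D_•, D_∘)` of formal power series in `ℚ⟦t_•, t_∘⟧`,
both with constant coefficient `0`, satisfying
`D_• = t_• + 2·(t_•+t_∘)·D_• + t_•·D_∘·D_•` and
`D_∘ = t_∘ + 2·(t_•+t_∘)·D_∘ + t_∘·D_•·D_∘`. -/
theorem unique_primitive_motzkin_series :
    ∃! P : MvPowerSeries (Fin 2) ℚ × MvPowerSeries (Fin 2) ℚ,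
      MvPowerSeries.constantCoeff P.1 = 0 ∧
      MvPowerSeries.constantCoeff P.2 = 0 ∧
      P.1 = MvPowerSeries.X 0 + 2 * (MvPowerSeries.X 0 + MvPowerSeries.X 1) * P.1 +
        MvPowerSeries.X 0 * P.2 * P.1 ∧
      P.2 = MvPowerSeries.X 1 + 2 * (MvPowerSeries.X 0 + MvPowerSeries.X 1) * P.2 +
        MvPowerSeries.X 1 * P.1 * P.2 := by
  have hX (i : Fin 2) : constantCoeff (X i : MvPowerSeries (Fin 2) ℚ) = 0 := constantCoeff_X i
  have hc : constantCoeff (2 * (X 0 + X 1) : MvPowerSeries (Fin 2) ℚ) = 0 := by simp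
  obtain ⟨D, hD, hunique⟩ := existsUnique_isFixedPt_motzkinMap (hX 0) (hX 1) hc
  obtain ⟨hD₁, hD₂⟩ := Prod.ext_iff.mp hD.symm
  refine ⟨D, ⟨?_, ?_, hD₁, hD₂⟩, fun Q ⟨_, _, hQ₁, hQ₂⟩ => hunique Q (Prod.ext hQ₁.symm hQ₂.symm)⟩
  · rw [hD₁]; exact constantCoeff_motzkinRhs (hX 0) hc _ _
  · rw [hD₂]; exact constantCoeff_motzkinRhs (hX 1) hc _ _
end

section
/- The identity t_∘ · D_• = t_• · D_∘ holds in ℚ⟦t_•, t_∘⟧. -/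
/-! Subtracting `t_• · (equation for D_∘)` from `t_∘ · (equation for D_•)` cancels the constant
and the quadratic terms, leaving `(1 - 2(t_• + t_∘)) · (t_∘ D_• - t_• D_∘) = 0`; the first factor
has constant coefficient `1`, so it is a unit. -/

theorem mul_eq_mul_of_eq_add_mul_add_mul_mul {R : Type*} [CommRing R] {a b s x y : R}
    (hs : IsUnit (1 - s)) (hx : x = a + s * x + a * y * x) (hy : y = b + s * y + b * x * y) :
    b * x = a * y := by
  have hprod : (1 - s) * (b * x - a * y) = 0 := by
    linear_combination b * hx - a * hy
  exact sub_eq_zero.mp (hs.mul_right_eq_zero.mp hprod)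

theorem MvPowerSeries.isUnit_one_sub {σ R : Type*} [Ring R] {φ : MvPowerSeries σ R}
    (hφ : constantCoeff φ = 0) : IsUnit (1 - φ) := by
  rw [isUnit_iff_constantCoeff, map_sub, map_one, hφ, sub_zero]
  exact isUnit_one

theorem motzkin_series_cross_identity_general
    (Db Do : MvPowerSeries (Fin 2) ℚ)
    (hDb : Db = MvPowerSeries.X 0 + 2 * (MvPowerSeries.X 0 + MvPowerSeries.X 1) * Db +
      MvPowerSeries.X 0 * Do * Db)
    (hDo : Do = MvPowerSeries.X 1 + 2 * (MvPowerSeries.X 0 + MvPowerSeries.X 1) * Do +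
      MvPowerSeries.X 1 * Db * Do) :
    MvPowerSeries.X 1 * Db = MvPowerSeries.X 0 * Do :=
  mul_eq_mul_of_eq_add_mul_add_mul_mul (MvPowerSeries.isUnit_one_sub (by simp)) hDb hDo

/-- The identity `t_∘ · D_• = t_• · D_∘` holds in `ℚ⟦t_•, t_∘⟧`. -/
theorem motzkin_series_cross_identity
    (Db Do : MvPowerSeries (Fin 2) ℚ)
    (hDb0 : MvPowerSeries.constantCoeff Db = 0)
    (hDo0 : MvPowerSeries.constantCoeff Do = 0)
    (hDb : Db = MvPowerSeries.X 0 + 2 * (MvPowerSeries.X 0 + MvPowerSeries.X 1) * Db +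
      MvPowerSeries.X 0 * Do * Db)
    (hDo : Do = MvPowerSeries.X 1 + 2 * (MvPowerSeries.X 0 + MvPowerSeries.X 1) * Do +
      MvPowerSeries.X 1 * Db * Do) :
    MvPowerSeries.X 1 * Db = MvPowerSeries.X 0 * Do :=
  motzkin_series_cross_identity_general Db Do hDb hDo
end

section
/- The series B is symmetric in its two variables: for all natural numbers a, b, the coefficient of t_•^a·t_∘^b in B equals the coefficient of t_•^b·t_∘^a in B. -/
/-!
Exchanging `t_•` and `t_∘` turns the system for `(D_•, D_∘)` into the same system with the two
equations swapped, so `(swap D_∘, swap D_•)` is again a solution. Solutions are unique: the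
differences `u, v` of two solutions satisfy `u = A u + B v`, `v = C u + D v` with `A, B, C, D`
without constant term, so `min (order u) (order v)` exceeds itself by one and must be `⊤`.
Hence `swap D_• = D_∘`, the equation for `B` becomes swap-invariant, and `swap B = B` by the
same argument.
-/

open MvPowerSeries

theorem ENat.eq_top_of_one_add_le {m : ℕ∞} (h : 1 + m ≤ m) : m = ⊤ := by
  by_contra hm
  exact lt_irrefl m ((ENat.add_one_le_iff hm).1 (by rwa [add_comm]))

namespace MvPowerSeries

section Semiring

variable {σ R : Type*} [Semiring R]

theorem one_add_order_le_order_mul {A : MvPowerSeries σ R} (hA : constantCoeff A = 0)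
    (f : MvPowerSeries σ R) : 1 + f.order ≤ (A * f).order :=
  (add_le_add (one_le_order_iff_constCoeff_eq_zero.2 hA) le_rfl).trans le_order_mul

theorem eq_zero_of_eq_mul {A f : MvPowerSeries σ R} (hA : constantCoeff A = 0)
    (hf : f = A * f) : f = 0 := by
  rw [← order_eq_top_iff]
  refine ENat.eq_top_of_one_add_le ?_
  calc 1 + f.order ≤ (A * f).order := one_add_order_le_order_mul hA f
    _ = f.order := by rw [← hf]

theorem eq_zero_of_eq_mul_add_mul_s6 {A B C D u v : MvPowerSeries σ R}
    (hA : constantCoeff A = 0) (hB : constantCoeff B = 0)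
    (hC : constantCoeff C = 0) (hD : constantCoeff D = 0)
    (hu : u = A * u + B * v) (hv : v = C * u + D * v) : u = 0 ∧ v = 0 := by
  set m := min u.order v.order
  have one_add_le {P Q : MvPowerSeries σ R} (hP : constantCoeff P = 0)
      (hQ : constantCoeff Q = 0) : 1 + m ≤ (P * u + Q * v).order :=
    calc 1 + m ≤ min (1 + u.order) (1 + v.order) := (add_min _ _ _).le
      _ ≤ min (P * u).order (Q * v).order :=
        min_le_min (one_add_order_le_order_mul hP u) (one_add_order_le_order_mul hQ v)
      _ ≤ (P * u + Q * v).order := min_order_le_add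
  have hm : m = ⊤ := ENat.eq_top_of_one_add_le <|
    le_min ((one_add_le hA hB).trans_eq (by rw [← hu]))
      ((one_add_le hC hD).trans_eq (by rw [← hv]))
  simpa [m] using hm

end Semiring

section Swap

variable {R : Type*} [CommSemiring R]

noncomputable def swapVars : MvPowerSeries (Fin 2) R →ₐ[R] MvPowerSeries (Fin 2) R :=
  rename (Equiv.swap 0 1)

@[simp] theorem swapVars_X_zero : swapVars (X 0 : MvPowerSeries (Fin 2) R) = X 1 := by
  simp [swapVars]

@[simp] theorem swapVars_X_one : swapVars (X 1 : MvPowerSeries (Fin 2) R) = X 0 := by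
  simp [swapVars]

@[simp] theorem constantCoeff_swapVars (f : MvPowerSeries (Fin 2) R) :
    constantCoeff (swapVars f) = constantCoeff f :=
  constantCoeff_rename _ f

theorem coeff_swapVars (a b : ℕ) (f : MvPowerSeries (Fin 2) R) :
    coeff (Finsupp.single 0 a + Finsupp.single 1 b) (swapVars f) =
      coeff (Finsupp.single 0 b + Finsupp.single 1 a) f := by
  have := coeff_embDomain_rename (Equiv.swap (0 : Fin 2) 1).toEmbedding f
    (Finsupp.single 0 b + Finsupp.single 1 a)
  simpa [swapVars, Finsupp.embDomain_add, add_comm] using this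

end Swap

end MvPowerSeries

section Motzkin

variable {R : Type*} [CommRing R] {Db Do B : MvPowerSeries (Fin 2) R}

theorem swapVars_motzkin_pair (hDb0 : constantCoeff Db = 0) (hDo0 : constantCoeff Do = 0)
    (hDb : Db = X 0 + 2 * (X 0 + X 1) * Db + X 0 * Do * Db)
    (hDo : Do = X 1 + 2 * (X 0 + X 1) * Do + X 1 * Db * Do) :
    swapVars Db = Do ∧ swapVars Do = Db := by
  have hSDb : swapVars Db =
      X 1 + 2 * (X 0 + X 1) * swapVars Db + X 1 * swapVars Do * swapVars Db := by
    conv_lhs => rw [hDb]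
    simp only [map_add, map_mul, map_ofNat, swapVars_X_zero, swapVars_X_one]
    ring
  have hSDo : swapVars Do =
      X 0 + 2 * (X 0 + X 1) * swapVars Do + X 0 * swapVars Db * swapVars Do := by
    conv_lhs => rw [hDo]
    simp only [map_add, map_mul, map_ofNat, swapVars_X_zero, swapVars_X_one]
    ring
  have h := eq_zero_of_eq_mul_add_mul_s6 (u := swapVars Db - Do) (v := swapVars Do - Db)
    (A := 2 * (X 0 + X 1) + X 1 * swapVars Do) (B := X 1 * Do)
    (C := X 0 * Db) (D := 2 * (X 0 + X 1) + X 0 * swapVars Db)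
    (by simp [hDo0]) (by simp) (by simp) (by simp [hDb0])
    (by linear_combination hSDb - hDo) (by linear_combination hSDo - hDb)
  exact ⟨sub_eq_zero.1 h.1, sub_eq_zero.1 h.2⟩

theorem swapVars_motzkin_bridge (hDbDo : swapVars Db = Do) (hDoDb : swapVars Do = Db)
    (hB : B = 1 + 2 * (X 0 + X 1) * B + (X 0 * Do + X 1 * Db) * B) :
    swapVars B = B := by
  have hSB : swapVars B =
      1 + 2 * (X 0 + X 1) * swapVars B + (X 0 * Do + X 1 * Db) * swapVars B := by
    conv_lhs => rw [hB]
    simp only [map_add, map_mul, map_one, map_ofNat, swapVars_X_zero, swapVars_X_one, hDbDo, hDoDb]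
    ring
  exact sub_eq_zero.1 (eq_zero_of_eq_mul (A := 2 * (X 0 + X 1) + (X 0 * Do + X 1 * Db))
    (by simp) (by linear_combination hSB - hB))

end Motzkin

/-- The Motzkin bridge series `B` is symmetric in its two variables: the coefficient of
`t_•^a·t_∘^b` in `B` equals the coefficient of `t_•^b·t_∘^a` in `B`. -/
theorem motzkin_bridge_series_symm
    (Db Do B : MvPowerSeries (Fin 2) ℚ)
    (hDb0 : MvPowerSeries.constantCoeff (σ := Fin 2) (R := ℚ) Db = 0)
    (hDo0 : MvPowerSeries.constantCoeff (σ := Fin 2) (R := ℚ) Do = 0)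
    (hDb : Db = MvPowerSeries.X 0 + 2 * (MvPowerSeries.X 0 + MvPowerSeries.X 1) * Db +
      MvPowerSeries.X 0 * Do * Db)
    (hDo : Do = MvPowerSeries.X 1 + 2 * (MvPowerSeries.X 0 + MvPowerSeries.X 1) * Do +
      MvPowerSeries.X 1 * Db * Do)
    (hB : B = 1 + 2 * (MvPowerSeries.X 0 + MvPowerSeries.X 1) * B +
      (MvPowerSeries.X 0 * Do + MvPowerSeries.X 1 * Db) * B) :
    ∀ a b : ℕ,
      MvPowerSeries.coeff (R := ℚ) (Finsupp.single (0 : Fin 2) a + Finsupp.single 1 b) B =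
      MvPowerSeries.coeff (R := ℚ) (Finsupp.single (0 : Fin 2) b + Finsupp.single 1 a) B := by
  obtain ⟨hDbDo, hDoDb⟩ := swapVars_motzkin_pair hDb0 hDo0 hDb hDo
  intro a b
  rw [← coeff_swapVars, swapVars_motzkin_bridge hDbDo hDoDb hB]
end

section
/- The series B satisfies the identity B · (1 − D_•·D_∘) = 1 + 2·(D_• + D_∘) + D_•·D_∘ in ℚ⟦t_•, t_∘⟧. -/
/-!
Write `u = t_•`, `v = t_∘`, `a = D_•`, `b = D_∘` and `N = 1 + 2(a + b) + ab`. The defining equations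
say `(1 - 2(u + v)) a = (1 + ab) u` and `(1 - 2(u + v)) b = (1 + ab) v`, so, `1 + ab` being a unit,
`ub = va`. With this, the equation for `a` rearranges to `N u = a`, and likewise `N v = b`.
The equation for `B` says that `B` is inverse to `K = 1 - 2(u + v) - (ub + va)`, and
`N K = N - 2(a + b) - 2ab = 1 - ab`, so `B (1 - ab) = B N K = N`.
-/

section BridgeSystem

variable {R : Type*} [CommRing R] {u v a b : R}

theorem mul_eq_mul_of_bridge_system (ha : a = u + 2 * (u + v) * a + u * b * a)
    (hb : b = v + 2 * (u + v) * b + v * a * b) (hreg : IsLeftRegular (1 + a * b)) :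
    u * b = v * a :=
  sub_eq_zero.mp <| hreg <| by linear_combination a * hb - b * ha

theorem bridge_num_mul_kernel (ha : a = u + 2 * (u + v) * a + u * b * a)
    (hb : b = v + 2 * (u + v) * b + v * a * b) (hreg : IsLeftRegular (1 + a * b)) :
    (1 + 2 * (a + b) + a * b) * (1 - 2 * (u + v) - (u * b + v * a)) = 1 - a * b := by
  have hcross := mul_eq_mul_of_bridge_system ha hb hreg
  have hu : (1 + 2 * (a + b) + a * b) * u = a := by linear_combination -ha + 2 * hcross
  have hv : (1 + 2 * (a + b) + a * b) * v = b := by linear_combination -hb - 2 * hcross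
  linear_combination (-2 - b) * hu + (-2 - a) * hv

end BridgeSystem

/-- The bridge series satisfies `B · (1 − D_•·D_∘) = 1 + 2·(D_• + D_∘) + D_•·D_∘`. -/
theorem motzkin_bridge_series_rational_expression
    (Db Do B : MvPowerSeries (Fin 2) ℚ)
    (hDb0 : MvPowerSeries.constantCoeff Db = 0)
    (hDo0 : MvPowerSeries.constantCoeff Do = 0)
    (hDb : Db = MvPowerSeries.X 0 + 2 * (MvPowerSeries.X 0 + MvPowerSeries.X 1) * Db +
      MvPowerSeries.X 0 * Do * Db)
    (hDo : Do = MvPowerSeries.X 1 + 2 * (MvPowerSeries.X 0 + MvPowerSeries.X 1) * Do +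
      MvPowerSeries.X 1 * Db * Do)
    (hB : B = 1 + 2 * (MvPowerSeries.X 0 + MvPowerSeries.X 1) * B +
      (MvPowerSeries.X 0 * Do + MvPowerSeries.X 1 * Db) * B) :
    B * (1 - Db * Do) = 1 + 2 * (Db + Do) + Db * Do := by
  have hunit : IsUnit (1 + Db * Do) :=
    MvPowerSeries.isUnit_iff_constantCoeff.mpr (by simp [hDb0, hDo0])
  have hNK := bridge_num_mul_kernel hDb hDo hunit.isRegular.left
  set K := 1 - 2 * (MvPowerSeries.X 0 + MvPowerSeries.X 1) -
    (MvPowerSeries.X 0 * Do + MvPowerSeries.X 1 * Db)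
  have hBK : B * K = 1 := by linear_combination hB
  calc B * (1 - Db * Do) = B * K * (1 + 2 * (Db + Do) + Db * Do) := by rw [← hNK]; ring
    _ = 1 + 2 * (Db + Do) + Db * Do := by rw [hBK, one_mul]
end

section
/- The variables can be recovered rationally from D_• and D_∘: the identities t_• · (1 + 2·D_• + 2·D_∘ + D_•·D_∘) = D_• and t_∘ · (1 + 2·D_• + 2·D_∘ + D_•·D_∘) = D_∘ hold in ℚ⟦t_•, t_∘⟧. -/
/-!
Subtracting `t_•` times the equation for `D_∘` from `t_∘` times the equation for `D_•` cancels the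
quadratic terms and leaves `(1 - 2 (t_• + t_∘)) (t_∘ D_• - t_• D_∘) = 0`. As `1 - 2 (t_• + t_∘)` is a
unit, `t_∘ D_• = t_• D_∘`, and substituting this into the defining equations gives the identities.
-/

section RecoverVariables

variable {R : Type*} [CommRing R] {a b x y : R}

theorem mul_eq_mul_of_motzkin_system (hreg : IsLeftRegular (1 - 2 * (a + b)))
    (hx : x = a + 2 * (a + b) * x + a * y * x) (hy : y = b + 2 * (a + b) * y + b * x * y) :
    b * x = a * y :=
  hreg <| by linear_combination b * hx - a * hy

theorem mul_quadratic_eq_of_motzkin_system (hreg : IsLeftRegular (1 - 2 * (a + b)))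
    (hx : x = a + 2 * (a + b) * x + a * y * x) (hy : y = b + 2 * (a + b) * y + b * x * y) :
    a * (1 + 2 * x + 2 * y + x * y) = x ∧ b * (1 + 2 * x + 2 * y + x * y) = y := by
  have hcross := mul_eq_mul_of_motzkin_system hreg hx hy
  exact ⟨by linear_combination -hx - 2 * hcross, by linear_combination -hy + 2 * hcross⟩

end RecoverVariables

theorem MvPowerSeries.isUnit_one_sub_two_mul_X_add_X {σ R : Type*} [CommRing R] (i j : σ) :
    IsUnit (1 - 2 * (X i + X j) : MvPowerSeries σ R) := by
  simp [isUnit_iff_constantCoeff]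

theorem motzkin_series_recover_variables_general
    (Db Do : MvPowerSeries (Fin 2) ℚ)
    (hDb : Db = MvPowerSeries.X 0 + 2 * (MvPowerSeries.X 0 + MvPowerSeries.X 1) * Db +
      MvPowerSeries.X 0 * Do * Db)
    (hDo : Do = MvPowerSeries.X 1 + 2 * (MvPowerSeries.X 0 + MvPowerSeries.X 1) * Do +
      MvPowerSeries.X 1 * Db * Do) :
    MvPowerSeries.X 0 * (1 + 2 * Db + 2 * Do + Db * Do) = Db ∧
    MvPowerSeries.X 1 * (1 + 2 * Db + 2 * Do + Db * Do) = Do :=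
  mul_quadratic_eq_of_motzkin_system
    (MvPowerSeries.isUnit_one_sub_two_mul_X_add_X 0 1).isRegular.left hDb hDo

/-- The variables can be recovered rationally from `D_•` and `D_∘`:
`t_• · (1 + 2·D_• + 2·D_∘ + D_•·D_∘) = D_•` and
`t_∘ · (1 + 2·D_• + 2·D_∘ + D_•·D_∘) = D_∘`. -/
theorem motzkin_series_recover_variables
    (Db Do : MvPowerSeries (Fin 2) ℚ)
    (hDb0 : MvPowerSeries.constantCoeff Db = 0)
    (hDo0 : MvPowerSeries.constantCoeff Do = 0)
    (hDb : Db = MvPowerSeries.X 0 + 2 * (MvPowerSeries.X 0 + MvPowerSeries.X 1) * Db +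
      MvPowerSeries.X 0 * Do * Db)
    (hDo : Do = MvPowerSeries.X 1 + 2 * (MvPowerSeries.X 0 + MvPowerSeries.X 1) * Do +
      MvPowerSeries.X 1 * Db * Do) :
    MvPowerSeries.X 0 * (1 + 2 * Db + 2 * Do + Db * Do) = Db ∧
    MvPowerSeries.X 1 * (1 + 2 * Db + 2 * Do + Db * Do) = Do :=
  motzkin_series_recover_variables_general Db Do hDb hDo
end

section
/- In every Motzkin bridge w, the number of even non-horizontal steps equals the number of odd non-horizontal steps: e(w) = o(w). -/
/-! A non-horizontal step changes the parity of the height and a horizontal one keeps it, so a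
step contributes `+1` to `e - o` exactly when it leaves an even height for an odd one and `-1`
exactly when it does the reverse. The sum `e - o` therefore telescopes to the parity change
between the start and the end of the walk, which is zero for a bridge. -/

open Finset

lemma ite_even_sub_ite_odd_eq_of_step (h a : ℤ) (ha : a = -1 ∨ a = 0 ∨ a = 1) :
    ((if a ≠ 0 ∧ Even h then 1 else 0) : ℤ) - (if a ≠ 0 ∧ Odd h then 1 else 0) =
      (if Even h then 1 else 0) - (if Even (h + a) then 1 else 0) := by
  rcases ha with rfl | rfl | rfl <;>
    by_cases he : Even h <;> simp [he, ← Int.not_even_iff_odd, Int.even_add]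

lemma card_even_steps_sub_card_odd_steps (w : List ℤ) (hw : ∀ a ∈ w, a = -1 ∨ a = 0 ∨ a = 1) :
    ((#{i ∈ range w.length | w.getD i 0 ≠ 0 ∧ Even (w.take i).sum} : ℕ) : ℤ) -
        #{i ∈ range w.length | w.getD i 0 ≠ 0 ∧ Odd (w.take i).sum} =
      1 - if Even w.sum then 1 else 0 := by
  set height : ℕ → ℤ := fun i => (w.take i).sum
  have height_succ (i : ℕ) (hi : i < w.length) : height (i + 1) = height i + w[i] :=
    List.sum_take_succ w i hi
  rw [natCast_card_filter, natCast_card_filter, ← sum_sub_distrib]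
  calc ∑ i ∈ range w.length, (((if w.getD i 0 ≠ 0 ∧ Even (height i) then 1 else 0) : ℤ) -
          (if w.getD i 0 ≠ 0 ∧ Odd (height i) then 1 else 0))
      = ∑ i ∈ range w.length, (((if Even (height i) then 1 else 0) : ℤ) -
          (if Even (height (i + 1)) then 1 else 0)) := by
        refine sum_congr rfl fun i hi => ?_
        have hi : i < w.length := mem_range.mp hi
        rw [List.getD_eq_getElem w 0 hi, height_succ i hi]
        exact ite_even_sub_ite_odd_eq_of_step _ _ (hw _ (List.getElem_mem hi))
    _ = 1 - if Even w.sum then 1 else 0 := by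
        rw [sum_range_sub']
        simp [height]

/-- In every Motzkin bridge `w` (a list of steps in `{−1,0,+1}` with total sum `0`), the
number of non-horizontal steps at even height equals the number of non-horizontal steps at
odd height: `e(w) = o(w)`. The height of the `i`-th step is the sum of the preceding
steps. -/
theorem motzkin_bridge_even_eq_odd
    (w : List ℤ) (hw : ∀ a ∈ w, a = -1 ∨ a = 0 ∨ a = 1)
    (hbridge : w.sum = 0) :
    ((Finset.range w.length).filter
        (fun i => w.getD i 0 ≠ 0 ∧ Even ((w.take i).sum))).card =
    ((Finset.range w.length).filter
        (fun i => w.getD i 0 ≠ 0 ∧ Odd ((w.take i).sum))).card := by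
  have h := card_even_steps_sub_card_odd_steps w hw
  simp only [hbridge, Even.zero, if_true, sub_self] at h
  omega
end

section
/- In every primitive Motzkin walk w, the number of even non-horizontal steps exceeds the number of odd non-horizontal steps by exactly one: e(w) = o(w) + 1. -/
/-!
Weight the height `h` by the sign `(-1)^h`. A horizontal step keeps the sign, while a step `±1`
flips it, changing it by `2` if it starts at even height and by `-2` if it starts at odd height.
Summing along the walk, `2 (e(w) - o(w))` telescopes to `(-1)^0 - (-1)^(sum of w)`, which is `2`
when the walk ends at height `-1`.
-/

open Finset

namespace Motzkin

def evenSteps (w : List ℤ) : ℕ :=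
  #{i ∈ range w.length | w.getD i 0 ≠ 0 ∧ Even (w.take i).sum}

def oddSteps (w : List ℤ) : ℕ :=
  #{i ∈ range w.length | w.getD i 0 ≠ 0 ∧ Odd (w.take i).sum}

theorem two_mul_sub_ite_eq_negOnePow_sub (h a : ℤ) (ha : a = -1 ∨ a = 0 ∨ a = 1) :
    2 * ((if a ≠ 0 ∧ Even h then 1 else 0) - (if a ≠ 0 ∧ Odd h then 1 else 0) : ℤ) =
      (h.negOnePow : ℤ) - ((h + a).negOnePow : ℤ) := by
  by_cases ha0 : a = 0
  · simp [ha0]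
  have hflip : (h + a).negOnePow = -h.negOnePow := by
    have ha_odd : Odd a := by rcases ha with rfl | rfl | rfl <;> simp_all
    rw [Int.negOnePow_add, Int.negOnePow_odd a ha_odd, mul_neg_one]
  rcases Int.even_or_odd h with he | ho
  · simp [ha0, hflip, he, Int.negOnePow_even h he, Int.not_odd_iff_even.mpr he]
  · simp [ha0, hflip, ho, Int.negOnePow_odd h ho, Int.not_even_iff_odd.mpr ho]

theorem two_mul_evenSteps_sub_oddSteps (w : List ℤ) (hw : ∀ a ∈ w, a = -1 ∨ a = 0 ∨ a = 1) :
    2 * ((evenSteps w : ℤ) - oddSteps w) = 1 - (w.sum.negOnePow : ℤ) := by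
  let height (i : ℕ) : ℤ := (w.take i).sum
  calc 2 * ((evenSteps w : ℤ) - oddSteps w)
      = ∑ i ∈ range w.length, 2 * ((if w.getD i 0 ≠ 0 ∧ Even (height i) then 1 else 0) -
          (if w.getD i 0 ≠ 0 ∧ Odd (height i) then 1 else 0) : ℤ) := by
        simp only [evenSteps, oddSteps, card_filter, Nat.cast_sum, Nat.cast_ite, Nat.cast_one,
          Nat.cast_zero, ← sum_sub_distrib, mul_sum]
        rfl
    _ = ∑ i ∈ range w.length,
          (((height i).negOnePow : ℤ) - ((height (i + 1)).negOnePow : ℤ)) := by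
        refine sum_congr rfl fun i hi => ?_
        have hi : i < w.length := mem_range.mp hi
        have hstep : height (i + 1) = height i + w[i] := List.sum_take_succ _ _ hi
        rw [hstep, List.getD_eq_getElem _ _ hi]
        exact two_mul_sub_ite_eq_negOnePow_sub _ _ (hw _ (List.getElem_mem hi))
    _ = 1 - (w.sum.negOnePow : ℤ) := by
        rw [sum_range_sub']
        simp [height]

end Motzkin

open Motzkin in
theorem primitive_motzkin_even_eq_odd_add_one_general
    (w : List ℤ) (hw : ∀ a ∈ w, a = -1 ∨ a = 0 ∨ a = 1)
    (hsum : w.sum = -1) :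
    ((Finset.range w.length).filter
        (fun i => w.getD i 0 ≠ 0 ∧ Even ((w.take i).sum))).card =
    ((Finset.range w.length).filter
        (fun i => w.getD i 0 ≠ 0 ∧ Odd ((w.take i).sum))).card + 1 := by
  have key := two_mul_evenSteps_sub_oddSteps w hw
  rw [hsum, Int.negOnePow_odd _ odd_neg_one] at key
  change evenSteps w = oddSteps w + 1
  push_cast at key
  omega

/-- In every primitive Motzkin walk `w` (a list of steps in `{−1,0,+1}` with total sum `−1`
all of whose steps start at nonnegative height), the number of non-horizontal steps at even
height exceeds the number of non-horizontal steps at odd height by exactly one: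
`e(w) = o(w) + 1`. The height of the `i`-th step is the sum of the preceding steps. -/
theorem primitive_motzkin_even_eq_odd_add_one
    (w : List ℤ) (hw : ∀ a ∈ w, a = -1 ∨ a = 0 ∨ a = 1)
    (hsum : w.sum = -1)
    (hnonneg : ∀ i < w.length, 0 ≤ (w.take i).sum) :
    ((Finset.range w.length).filter
        (fun i => w.getD i 0 ≠ 0 ∧ Even ((w.take i).sum))).card =
    ((Finset.range w.length).filter
        (fun i => w.getD i 0 ≠ 0 ∧ Odd ((w.take i).sum))).card + 1 :=
  primitive_motzkin_even_eq_odd_add_one_general w hw hsum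
end
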